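/- Under scale invariance of f on coordinate subset A, with g(θ) = ∇f(θ) + λθ and ξ₀(θ) = (1/2)(H(θ)+λI)g(θ), the inner product satisfies θ_A · ξ₀(θ) = (1/2)·(λ²‖θ_A‖² - ‖∇_A f(θ)‖²). -/

import Mathlib

open InnerProductSpace

/-- Projection of `θ` onto the coordinates in `A` (other coordinates set to zero). -/
def projA {d : ℕ} (A : Finset (Fin d)) (θ : EuclideanSpace ℝ (Fin d)) :
    EuclideanSpace ℝ (Fin d) :=
  WithLp.toLp 2 (fun i => if i ∈ A then θ i else 0)

/-- Projection of `θ` onto the coordinates outside `A`. -/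
def projAc {d : ℕ} (A : Finset (Fin d)) (θ : EuclideanSpace ℝ (Fin d)) :
    EuclideanSpace ℝ (Fin d) :=
  WithLp.toLp 2 (fun i => if i ∈ A then 0 else θ i)

section Aux

variable {d : ℕ} (A : Finset (Fin d))

lemma projA_add_projAc (θ : EuclideanSpace ℝ (Fin d)) :
    projA A θ + projAc A θ = θ := by
  ext i
  simp only [projA, projAc, PiLp.add_apply]
  split <;> simp

lemma projA_add (x y : EuclideanSpace ℝ (Fin d)) :
    projA A (x + y) = projA A x + projA A y := by
  ext i
  simp only [projA, PiLp.add_apply]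
  split <;> simp

lemma projA_smul (c : ℝ) (x : EuclideanSpace ℝ (Fin d)) :
    projA A (c • x) = c • projA A x := by
  ext i
  simp only [projA, PiLp.smul_apply, smul_eq_mul]
  split <;> simp

/-- `projA` as a continuous linear map. -/
noncomputable def projACLM : EuclideanSpace ℝ (Fin d) →L[ℝ] EuclideanSpace ℝ (Fin d) :=
  LinearMap.toContinuousLinearMap
    { toFun := projA A
      map_add' := projA_add A
      map_smul' := projA_smul A }

@[simp] lemma projACLM_apply (θ : EuclideanSpace ℝ (Fin d)) :
    projACLM A θ = projA A θ := rfl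

lemma inner_projA_projA (x y : EuclideanSpace ℝ (Fin d)) :
    (inner ℝ (projA A x) (projA A y) : ℝ) = inner ℝ (projA A x) y := by
  simp only [PiLp.inner_apply, RCLike.inner_apply, conj_trivial, projA]
  refine Finset.sum_congr rfl fun i _ => ?_
  split <;> ring

lemma gradient_inner (f : EuclideanSpace ℝ (Fin d) → ℝ) (θ v : EuclideanSpace ℝ (Fin d)) :
    (inner ℝ (gradient f θ) v : ℝ) = fderiv ℝ f θ v := by
  have : gradient f θ = (toDual ℝ (EuclideanSpace ℝ (Fin d))).symm (fderiv ℝ f θ) := rfl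
  rw [this, toDual_symm_apply]

/-- Euler identity from scale invariance: `⟪θ_A, ∇f(θ)⟫ = 0`. -/
lemma euler_identity (f : EuclideanSpace ℝ (Fin d) → ℝ) (hf : Differentiable ℝ f)
    (hinv : ∀ α : ℝ, 0 < α → ∀ θ, f (α • projA A θ + projAc A θ) = f θ)
    (θ : EuclideanSpace ℝ (Fin d)) :
    (inner ℝ (projA A θ) (gradient f θ) : ℝ) = 0 := by
  have h1 : HasDerivAt (fun α : ℝ => α • projA A θ + projAc A θ) (projA A θ) 1 := by
    simpa using ((hasDerivAt_id (1 : ℝ)).smul_const (projA A θ)).add_const (projAc A θ)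
  have hc : (1 : ℝ) • projA A θ + projAc A θ = θ := by
    rw [one_smul, projA_add_projAc]
  have h2 : HasDerivAt (fun α : ℝ => f (α • projA A θ + projAc A θ))
      (fderiv ℝ f θ (projA A θ)) 1 := by
    have hfθ : HasFDerivAt f (fderiv ℝ f θ) ((1 : ℝ) • projA A θ + projAc A θ) := by
      rw [hc]; exact (hf θ).hasFDerivAt
    exact hfθ.comp_hasDerivAt 1 h1
  have h3 : HasDerivAt (fun α : ℝ => f (α • projA A θ + projAc A θ)) 0 1 := by
    have hev : (fun α : ℝ => f (α • projA A θ + projAc A θ)) =ᶠ[nhds (1 : ℝ)]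
        fun _ => f θ := by
      filter_upwards [eventually_gt_nhds zero_lt_one] with α hα using hinv α hα θ
    exact (hasDerivAt_const (1 : ℝ) (f θ)).congr_of_eventuallyEq hev
  have h4 : fderiv ℝ f θ (projA A θ) = 0 := h2.unique h3
  rw [real_inner_comm, gradient_inner, h4]

/-- Differentiating the Euler identity: `⟪θ_A, H v⟫ = -⟪v_A, ∇f(θ)⟫`. -/
lemma hessian_identity (f : EuclideanSpace ℝ (Fin d) → ℝ) (hf : ContDiff ℝ (⊤ : ℕ∞) f)
    (hinv : ∀ α : ℝ, 0 < α → ∀ θ, f (α • projA A θ + projAc A θ) = f θ)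
    (θ v : EuclideanSpace ℝ (Fin d)) :
    (inner ℝ (projA A v) (gradient f θ) : ℝ)
      + inner ℝ (projA A θ) (fderiv ℝ (gradient f) θ v) = 0 := by
  have hfd : Differentiable ℝ (fderiv ℝ f) :=
    (hf.fderiv_right (m := 1) (WithTop.coe_le_coe.mpr le_top)).differentiable one_ne_zero
  let L : StrongDual ℝ (EuclideanSpace ℝ (Fin d)) →ₗ[ℝ] EuclideanSpace ℝ (Fin d) :=
    { toFun := (toDual ℝ (EuclideanSpace ℝ (Fin d))).symm
      map_add' := fun x y => map_add _ x y
      map_smul' := fun c y => by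
        simp }
  have hGd : Differentiable ℝ (gradient f) := by
    have hgr : gradient f = fun x => L.toContinuousLinearMap (fderiv ℝ f x) := rfl
    rw [hgr]
    exact (L.toContinuousLinearMap.differentiable).comp hfd
  have hP : HasFDerivAt (fun x : EuclideanSpace ℝ (Fin d) => (projACLM A) x)
      (projACLM A) θ := (projACLM A).hasFDerivAt
  have hG : HasFDerivAt (gradient f) (fderiv ℝ (gradient f) θ) θ :=
    (hGd θ).hasFDerivAt
  have hD := hP.inner ℝ hG
  have hzero : (fun x : EuclideanSpace ℝ (Fin d) =>
      (inner ℝ (projACLM A x) (gradient f x) : ℝ)) = fun _ => 0 := by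
    funext x
    exact euler_identity A f (hf.differentiable (by simp)) hinv x
  have hD0 : HasFDerivAt (fun x : EuclideanSpace ℝ (Fin d) =>
      (inner ℝ (projACLM A x) (gradient f x) : ℝ))
      (0 : EuclideanSpace ℝ (Fin d) →L[ℝ] ℝ) θ := by
    rw [hzero]; exact hasFDerivAt_const 0 θ
  have huniq := hD.unique hD0
  have h5 := congrArg (fun T : EuclideanSpace ℝ (Fin d) →L[ℝ] ℝ => T v) huniq
  simp only [ContinuousLinearMap.comp_apply, ContinuousLinearMap.prod_apply,
    fderivInnerCLM_apply, ContinuousLinearMap.zero_apply, projACLM_apply] at h5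
  linarith [h5]

end Aux

theorem scale_invariant_counter_term_inner_product {d : ℕ}
    (f : EuclideanSpace ℝ (Fin d) → ℝ) (hf : ContDiff ℝ (⊤ : ℕ∞) f)
    (A : Finset (Fin d))
    (hinv : ∀ α : ℝ, 0 < α → ∀ θ, f (α • projA A θ + projAc A θ) = f θ)
    (lam : ℝ)
    (g ξ₀ : EuclideanSpace ℝ (Fin d) → EuclideanSpace ℝ (Fin d))
    (hg : ∀ x, g x = gradient f x + lam • x)
    (hξ : ∀ x, ξ₀ x = (1 / 2 : ℝ) •
      (fderiv ℝ (fun y => gradient f y) x (g x) + lam • g x))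
    (θ : EuclideanSpace ℝ (Fin d)) :
    (inner ℝ (projA A θ) (ξ₀ θ) : ℝ) =
      (1 / 2 : ℝ) * (lam ^ 2 * ‖projA A θ‖ ^ 2 - ‖projA A (gradient f θ)‖ ^ 2) := by
  set u := projA A θ with hu
  set G := gradient f θ with hG
  have heuler : (inner ℝ u G : ℝ) = 0 :=
    euler_identity A f (hf.differentiable (by simp)) hinv θ
  have hGA : (inner ℝ (projA A G) G : ℝ) = ‖projA A G‖ ^ 2 := by
    rw [← inner_projA_projA, real_inner_self_eq_norm_sq]
  have huθ : (inner ℝ u θ : ℝ) = ‖u‖ ^ 2 := by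
    rw [hu, ← inner_projA_projA, real_inner_self_eq_norm_sq]
  have hhess : (inner ℝ u (fderiv ℝ (gradient f) θ (g θ)) : ℝ)
      = -(inner ℝ (projA A (g θ)) G : ℝ) := by
    have := hessian_identity A f hf hinv θ (g θ)
    linarith
  have hprojg : projA A (g θ) = projA A G + lam • u := by
    rw [hg, projA_add, projA_smul, hu, hG]
  have hinner_ug : (inner ℝ u (g θ) : ℝ) = lam * ‖u‖ ^ 2 := by
    rw [hg, inner_add_right, real_inner_smul_right, heuler, huθ]
    ring
  have hinner_uH : (inner ℝ u (fderiv ℝ (gradient f) θ (g θ)) : ℝ)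
      = -(‖projA A G‖ ^ 2) := by
    rw [hhess, hprojg, inner_add_left, real_inner_smul_left, hGA, heuler]
    ring
  rw [hξ]
  rw [real_inner_smul_right, inner_add_right, real_inner_smul_right]
  have hfd_eq : fderiv ℝ (fun y => gradient f y) θ (g θ)
      = fderiv ℝ (gradient f) θ (g θ) := rfl
  rw [hfd_eq, hinner_uH, hinner_ug]
  ring
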